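/- The ring ℤ/4ℤ is not regular in the sense of Vogel: the class of all free ℤ/4ℤ-modules is an exact class containing ℤ/4ℤ, and it does not contain the module ℤ/2ℤ; in particular the ℤ/4ℤ-module ℤ/2ℤ is not regular. -/

import Mathlib

/-!
Over `ℤ/4ℤ` a module `M` is free if and only if every element killed by `2` is divisible by `2`.
For the nontrivial direction, a basis of the `𝔽₂`-vector space `M/2M` lifts to a basis of `M`:
the lift spans because `2 * 2 = 0`, and it is independent by applying the divisibility condition
twice. The condition passes to filtered colimits elementwise and satisfies the 2/3 axiom by
diagram chases, so the free modules form an exact class; but `ℤ/2ℤ` is killed by `2` without being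
divisible by it.
-/

universe u

open CategoryTheory CategoryTheory.Limits

/-- A class of `R`-modules is stable under filtered colimits if, for every
filtered diagram of modules all of whose objects belong to the class, the
colimit (i.e. the point of any colimit cocone) again belongs to the class. -/
def StableUnderFilteredColimits (R : Type u) [Ring R] (S : Set (ModuleCat.{u} R)) : Prop :=
  ∀ (J : Type u) (_ : SmallCategory J) (_ : IsFiltered J)
    (F : J ⥤ ModuleCat.{u} R) (c : Cocone F), IsColimit c →
    (∀ j : J, F.obj j ∈ S) → c.pt ∈ S

/-- The 2/3 axiom: for every short exact sequence `0 → M → N → P → 0`, if two of the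
three modules belong to the class, then so does the third. -/
def SatisfiesTwoOfThree (R : Type u) [Ring R] (S : Set (ModuleCat.{u} R)) : Prop :=
  ∀ (M N P : ModuleCat.{u} R) (f : M →ₗ[R] N) (g : N →ₗ[R] P),
    Function.Injective f → Function.Surjective g → Function.Exact f g →
      ((M ∈ S → N ∈ S → P ∈ S) ∧ (M ∈ S → P ∈ S → N ∈ S) ∧ (N ∈ S → P ∈ S → M ∈ S))

/-- A class of `R`-modules is exact if it is stable under filtered colimits and
satisfies the 2/3 axiom. -/
def IsExactClass (R : Type u) [Ring R] (S : Set (ModuleCat.{u} R)) : Prop :=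
  StableUnderFilteredColimits R S ∧ SatisfiesTwoOfThree R S

/-- An `R`-module is regular (in the sense of Vogel) if it belongs to every exact class
containing the module `R` itself (i.e. to the smallest such class). -/
def IsRegularModule (R : Type u) [Ring R] (M : ModuleCat.{u} R) : Prop :=
  ∀ S : Set (ModuleCat.{u} R), IsExactClass R S → ModuleCat.of R R ∈ S → M ∈ S

/-- A ring `R` is regular in the sense of Vogel if every `R`-module is regular,
i.e. every exact class of `R`-modules containing `R` contains all `R`-modules. -/
def IsVogelRegular (R : Type u) [Ring R] : Prop :=
  ∀ M : ModuleCat.{u} R, IsRegularModule R M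

/-- A ring is right regular (in the sense of Vogel) if the opposite ring is regular for
left modules, i.e. the category of right `R`-modules (= left `Rᵐᵒᵖ`-modules) has the
Vogel regularity property. -/
def IsVogelRightRegular (R : Type u) [Ring R] : Prop := IsVogelRegular Rᵐᵒᵖ

/-- A module is flat iff it is a filtered colimit of finitely generated free modules
(Lazard's theorem); we take this characterization as the definition of flatness,
which makes sense over an arbitrary (possibly non-commutative) ring. -/
def IsLazardFlat (R : Type u) [Ring R] (M : Type u) [AddCommGroup M] [Module R M] : Prop :=
  ∃ (J : Type u) (_ : SmallCategory J) (_ : IsFiltered J)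
    (F : J ⥤ ModuleCat.{u} R) (c : Cocone F) (_ : IsColimit c),
    (∀ j : J, ∃ n : ℕ, Nonempty ((F.obj j) ≃ₗ[R] (Fin n → R))) ∧
    Nonempty (c.pt ≃ₗ[R] M)

/-- `ℤ/2ℤ` as a `ℤ/4ℤ`-module, via the canonical surjection `ℤ/4ℤ → ℤ/2ℤ`. -/
noncomputable instance : Module (ZMod 4) (ZMod 2) :=
  (ZMod.castHom (by norm_num : (2 : ℕ) ∣ 4) (ZMod 2)).toModule

open Pointwise

section IsSMulExact

variable {R : Type*} [Ring R] (a : R)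

/-- For `a * a = 0` this says that `M --a•--> M --a•--> M` is exact. -/
def IsSMulExact (M : Type*) [AddCommGroup M] [Module R M] : Prop :=
  ∀ x : M, a • x = 0 → ∃ y : M, a • y = x

variable {a} {M N P : Type*} [AddCommGroup M] [Module R M] [AddCommGroup N] [Module R N]
  [AddCommGroup P] [Module R P]

theorem IsSMulExact.of_free (hR : IsSMulExact a R) [Module.Free R M] : IsSMulExact a M := by
  intro x hx
  let b := Module.Free.chooseBasis R M
  have hc : ∀ i, a * b.repr x i = 0 := fun i => by
    rw [← smul_eq_mul, ← Finsupp.smul_apply, ← map_smul, hx, map_zero, Finsupp.zero_apply]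
  choose s hs using fun i => hR _ (hc i)
  refine ⟨∑ i ∈ (b.repr x).support, s i • b i, ?_⟩
  conv_rhs => rw [← b.linearCombination_repr x, Finsupp.linearCombination_apply, Finsupp.sum]
  simp only [Finset.smul_sum, smul_smul, ← smul_eq_mul, hs]

namespace Function.Exact

variable {f : M →ₗ[R] N} {g : N →ₗ[R] P} (hfg : Function.Exact f g)
  (hf : Function.Injective f) (hg : Function.Surjective g) (ha : a * a = 0)
include hfg hf hg ha

theorem isSMulExact_right (hM : IsSMulExact a M) (hN : IsSMulExact a N) : IsSMulExact a P := by
  intro p hp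
  obtain ⟨n, rfl⟩ := hg p
  obtain ⟨m, hm⟩ := (hfg (a • n)).1 (by rw [map_smul, hp])
  obtain ⟨m', rfl⟩ := hM m (hf (by rw [map_smul, hm, smul_smul, ha, zero_smul, map_zero]))
  obtain ⟨n', hn'⟩ := hN (n - f m') (by rw [smul_sub, ← map_smul, hm, sub_self])
  exact ⟨g n', by rw [← map_smul, hn', map_sub, hfg.apply_apply_eq_zero, sub_zero]⟩

theorem isSMulExact_middle (hM : IsSMulExact a M) (hP : IsSMulExact a P) : IsSMulExact a N := by
  intro n hn
  obtain ⟨p, hp⟩ := hP (g n) (by rw [← map_smul, hn, map_zero])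
  obtain ⟨n₀, rfl⟩ := hg p
  obtain ⟨m, hm⟩ := (hfg (n - a • n₀)).1 (by rw [map_sub, map_smul, hp, sub_self])
  obtain ⟨m', rfl⟩ := hM m (hf (by
    rw [map_smul, hm, map_zero, smul_sub, hn, smul_smul, ha, zero_smul, sub_zero]))
  exact ⟨n₀ + f m', by rw [smul_add, ← map_smul, hm, add_sub_cancel]⟩

theorem isSMulExact_left (hN : IsSMulExact a N) (hP : IsSMulExact a P) : IsSMulExact a M := by
  intro m hm
  obtain ⟨n, hn⟩ := hN (f m) (by rw [← map_smul, hm, map_zero])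
  obtain ⟨p, hp⟩ := hP (g n) (by rw [← map_smul, hn, hfg.apply_apply_eq_zero])
  obtain ⟨n₁, rfl⟩ := hg p
  obtain ⟨m₁, hm₁⟩ := (hfg (n - a • n₁)).1 (by rw [map_sub, map_smul, hp, sub_self])
  exact ⟨m₁, hf (by rw [map_smul, hm₁, smul_sub, smul_smul, ha, zero_smul, sub_zero, hn])⟩

end Function.Exact

end IsSMulExact

section ExactClass

variable {R : Type u} [Ring R] {a : R}

theorem satisfiesTwoOfThree_isSMulExact (ha : a * a = 0) :
    SatisfiesTwoOfThree R {M : ModuleCat.{u} R | IsSMulExact a M} :=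
  fun _ _ _ _ _ hf hg hfg =>
    ⟨hfg.isSMulExact_right hf hg ha, hfg.isSMulExact_middle hf hg ha,
      hfg.isSMulExact_left hf hg ha⟩

theorem stableUnderFilteredColimits_isSMulExact :
    StableUnderFilteredColimits R {M : ModuleCat.{u} R | IsSMulExact a M} := by
  intro J _ _ F c hc hF x hx
  obtain ⟨j, y, rfl⟩ := Concrete.isColimit_exists_rep F hc x
  obtain ⟨k, φ, ψ, hφψ⟩ := Concrete.isColimit_exists_of_rep_eq F hc (a • y) 0
    (by rw [map_smul, map_zero]; exact hx)
  rw [map_smul, map_zero] at hφψ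
  obtain ⟨w, hw⟩ := hF k _ hφψ
  refine ⟨c.ι.app k w, ?_⟩
  rw [← map_smul, hw]
  exact ConcreteCategory.congr_hom (c.w φ) y

theorem isExactClass_isSMulExact (ha : a * a = 0) :
    IsExactClass R {M : ModuleCat.{u} R | IsSMulExact a M} :=
  ⟨stableUnderFilteredColimits_isSMulExact, satisfiesTwoOfThree_isSMulExact ha⟩

end ExactClass

section FreeOfIsSMulExact

variable {R : Type*} [CommRing R] {a : R} {M : Type*} [AddCommGroup M] [Module R M]

theorem Submodule.eq_top_of_sup_smul_top_eq_top (ha : a * a = 0) {S : Submodule R M}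
    (h : S ⊔ a • ⊤ = ⊤) : S = ⊤ := by
  have hdiv : ∀ m : M, ∃ u : M, m - a • u ∈ S := fun m => by
    obtain ⟨s, hs, t, ht, rfl⟩ := Submodule.mem_sup.1 (h.ge (Submodule.mem_top (x := m)))
    obtain ⟨u, -, rfl⟩ := (Submodule.mem_smul_pointwise_iff_exists _ _ _).1 ht
    exact ⟨u, by rwa [add_sub_cancel_right]⟩
  refine eq_top_iff'.2 fun m => ?_
  obtain ⟨u, hu⟩ := hdiv m
  obtain ⟨w, hw⟩ := hdiv u
  have hm : m = (m - a • u) + a • (u - a • w) + (a * a) • w := by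
    rw [smul_sub, mul_smul]; abel
  rw [hm, ha, zero_smul, add_zero]
  exact S.add_mem hu (S.smul_mem a hw)

variable {ι : Type*} {x : ι → M}

theorem dvd_of_sum_smul_mem_smul_top
    (hx : LinearIndependent (R ⧸ Ideal.span {a}) ((a • ⊤ : Submodule R M).mkQ ∘ x))
    {s : Finset ι} {g : ι → R} (h : ∑ i ∈ s, g i • x i ∈ a • (⊤ : Submodule R M)) :
    ∀ i ∈ s, a ∣ g i := by
  have hsum : ∑ i ∈ s, Ideal.Quotient.mk (Ideal.span {a}) (g i) • (a • ⊤ : Submodule R M).mkQ (x i) = 0 := by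
    rw [← (Submodule.Quotient.mk_eq_zero _).2 h, ← Submodule.mkQ_apply, map_sum]
    rfl
  intro i hi
  rw [← Ideal.mem_span_singleton, ← Ideal.Quotient.eq_zero_iff_mem]
  exact linearIndependent_iff'.1 hx s _ hsum i hi

theorem linearIndependent_of_linearIndependent_mkQ (ha : a * a = 0) (hM : IsSMulExact a M)
    (hx : LinearIndependent (R ⧸ Ideal.span {a}) ((a • ⊤ : Submodule R M).mkQ ∘ x)) :
    LinearIndependent R x := by
  refine linearIndependent_iff'.2 fun s g hsum => ?_
  choose! d hd using dvd_of_sum_smul_mem_smul_top hx (hsum ▸ Submodule.zero_mem _)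
  have had : a • ∑ i ∈ s, d i • x i = 0 := by
    rw [Finset.smul_sum, ← hsum]
    exact Finset.sum_congr rfl fun i hi => by rw [smul_smul, hd i hi]
  obtain ⟨y, hy⟩ := hM _ had
  have hdd := dvd_of_sum_smul_mem_smul_top hx
    ((Submodule.mem_smul_pointwise_iff_exists _ _ _).2 ⟨y, Submodule.mem_top, hy⟩)
  intro i hi
  obtain ⟨e, he⟩ := hdd i hi
  rw [hd i hi, he, ← mul_assoc, ha, zero_mul]

theorem span_eq_top_of_span_mkQ_eq_top (ha : a * a = 0)
    (hx : Submodule.span (R ⧸ Ideal.span {a}) (Set.range ((a • ⊤ : Submodule R M).mkQ ∘ x)) = ⊤) :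
    Submodule.span R (Set.range x) = ⊤ := by
  refine Submodule.eq_top_of_sup_smul_top_eq_top ha ?_
  rw [sup_comm, ← Submodule.map_mkQ_eq_top, Submodule.map_span, ← Set.range_comp,
    ← Submodule.restrictScalars_span R _ (Ideal.Quotient.mk_surjective (I := Ideal.span {a})), hx,
    Submodule.restrictScalars_top]

theorem Module.free_of_isSMulExact (ha : a * a = 0) [(Ideal.span {a}).IsMaximal]
    (hM : IsSMulExact a M) : Module.Free R M := by
  let := Ideal.Quotient.field (Ideal.span {a})
  let b := Module.Basis.ofVectorSpace (R ⧸ Ideal.span {a}) (M ⧸ a • (⊤ : Submodule R M))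
  choose x hx using fun i => (a • ⊤ : Submodule R M).mkQ_surjective (b i)
  have hxb : (a • ⊤ : Submodule R M).mkQ ∘ x = b := funext hx
  exact .of_basis <| .mk (linearIndependent_of_linearIndependent_mkQ ha hM
    (hxb ▸ b.linearIndependent)) (span_eq_top_of_span_mkQ_eq_top ha (hxb ▸ b.span_eq)).ge

end FreeOfIsSMulExact

theorem isMaximal_span_two_zmod_four : (Ideal.span {(2 : ZMod 4)}).IsMaximal := by
  have hker : RingHom.ker (ZMod.castHom (by norm_num : 2 ∣ 4) (ZMod 2)) = Ideal.span {2} := by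
    ext x
    rw [RingHom.mem_ker, Ideal.mem_span_singleton']
    revert x
    decide
  exact hker ▸ RingHom.ker_isMaximal_of_surjective _ (ZMod.ringHom_surjective _)

theorem isSMulExact_two_zmod_four : IsSMulExact (2 : ZMod 4) (ZMod 4) := by
  unfold IsSMulExact
  decide

theorem free_zmod_four_iff_isSMulExact_two {M : Type*} [AddCommGroup M] [Module (ZMod 4) M] :
    Module.Free (ZMod 4) M ↔ IsSMulExact (2 : ZMod 4) M :=
  have := isMaximal_span_two_zmod_four
  ⟨fun _ => IsSMulExact.of_free isSMulExact_two_zmod_four, Module.free_of_isSMulExact (by decide)⟩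

theorem not_isSMulExact_two_zmod_two : ¬ IsSMulExact (2 : ZMod 4) (ZMod 2) := by
  unfold IsSMulExact
  decide

/-- the ring `ℤ/4ℤ` is not regular in the sense of Vogel: the class of
all free `ℤ/4ℤ`-modules is an exact class containing `ℤ/4ℤ` that does not contain
`ℤ/2ℤ`; in particular the `ℤ/4ℤ`-module `ℤ/2ℤ` is not regular. -/
theorem zmod4_not_vogelRegular :
    IsExactClass (ZMod 4) {M : ModuleCat (ZMod 4) | Module.Free (ZMod 4) M} ∧
    ModuleCat.of (ZMod 4) (ZMod 4) ∈ {M : ModuleCat (ZMod 4) | Module.Free (ZMod 4) M} ∧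
    ModuleCat.of (ZMod 4) (ZMod 2) ∉ {M : ModuleCat (ZMod 4) | Module.Free (ZMod 4) M} ∧
    ¬ IsRegularModule (ZMod 4) (ModuleCat.of (ZMod 4) (ZMod 2)) ∧
    ¬ IsVogelRegular (ZMod 4) := by
  have hfree : {M : ModuleCat (ZMod 4) | Module.Free (ZMod 4) M} =
      {M : ModuleCat (ZMod 4) | IsSMulExact (2 : ZMod 4) M} :=
    Set.ext fun _ => free_zmod_four_iff_isSMulExact_two
  have hexact : IsExactClass (ZMod 4) {M : ModuleCat (ZMod 4) | Module.Free (ZMod 4) M} :=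
    hfree ▸ isExactClass_isSMulExact (by decide)
  have hself : ModuleCat.of (ZMod 4) (ZMod 4) ∈
      {M : ModuleCat (ZMod 4) | Module.Free (ZMod 4) M} :=
    Module.Free.self (ZMod 4)
  have hnot : ModuleCat.of (ZMod 4) (ZMod 2) ∉
      {M : ModuleCat (ZMod 4) | Module.Free (ZMod 4) M} :=
    hfree ▸ not_isSMulExact_two_zmod_two
  have hnotreg : ¬ IsRegularModule (ZMod 4) (ModuleCat.of (ZMod 4) (ZMod 2)) :=
    fun h => hnot (h _ hexact hself)
  exact ⟨hexact, hself, hnot, hnotreg, fun h => hnotreg (h _)⟩
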